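/- arXiv:1503.04636 — 2 statements merged into one kernel-verified Lean document; each statement's English description precedes it below -/
import Mathlib

section
/- For all integers n ≥ 1 and k ≥ 0, A(n,k) = 2^{−2n} · C(2n+k, 2n)^{−1} · ∑_{l=0}^{n} a(n,l) · C(2n+k, 2n+l). -/
/-- `A(n,k) := (2·(2n)!/(2n+k)!) · ∑_{j=0}^{⌊k/2⌋} (−1)^j · C(k,j) · (k/2 − j)^{k+2n}` in `ℚ`. -/
def A (n k : ℕ) : ℚ :=
  (2 * (Nat.factorial (2 * n) : ℚ) / (Nat.factorial (2 * n + k) : ℚ)) *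
    ∑ j ∈ Finset.range (k / 2 + 1),
      (-1 : ℚ) ^ j * (Nat.choose k j : ℚ) * ((k : ℚ) / 2 - (j : ℚ)) ^ (k + 2 * n)

/-- Riordan's coefficients `a(n,l)`: `a(0,0) = 1`, `a(n,0) = 0` for `n ≥ 1`, and for `l ≥ 1`,
`a(n,l) = ∑_{i=l−1}^{n−1} a(i,l−1) · C(2n+l−1, 2n−2i)`. -/
def a : ℕ → ℕ → ℚ
  | 0, 0 => 1
  | _ + 1, 0 => 0
  | n, l + 1 => ∑ i ∈ Finset.Ico l n, a i l * (Nat.choose (2 * n + l) (2 * n - 2 * i) : ℚ)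

/-!
`(sinh x - x) ^ l / l!` is the exponential generating function `∑ₙ a(n,l) x^(2n+l) / (2n+l)!`:
differentiating `(sinh x - x) ^ (l+1) / (l+1)!` gives `(sinh x - x) ^ l / l! · (cosh x - 1)`, and
since `sinh x - x` is odd and `cosh x - 1` is even of order 2, comparing coefficients of this
product is exactly Riordan's recursion for `a`. So expanding `sinh ^ k = ((sinh x - x) + x) ^ k`
binomially gives `[x^(k+2n)] sinh ^ k = ∑ₗ C(k,l) l! a(n,l) / (2n+l)!`, while expanding
`(2 sinh (x/2)) ^ k = (e^(x/2) - e^(-x/2)) ^ k` turns the same coefficient into the alternating sum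
`∑_{j ≤ k} (-1)^j C(k,j) (k/2 - j)^(k+2n)`, up to explicit factors. That sum is twice the one in `A`
by the symmetry `j ↦ k - j`; the middle term vanishes because `k + 2n > 0`.
-/

open PowerSeries Finset Nat

namespace PowerSeries

section

variable {R : Type*} [CommRing R]

theorem coeff_pow_eq_zero_of_lt {f : R⟦X⟧} (hf : constantCoeff f = 0) {p l : ℕ} (h : p < l) :
    coeff p (f ^ l) = 0 :=
  X_pow_dvd_iff.mp (pow_dvd_pow_of_dvd (X_dvd_iff.mpr hf) l) p h

theorem coeff_pow_eq_zero_of_odd [IsAddTorsionFree R] {f : R⟦X⟧} (hf : rescale (-1) f = -f)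
    {p l : ℕ} (h : Odd (p + l)) : coeff p (f ^ l) = 0 := by
  have hcoeff := congrArg (coeff p) (map_pow (rescale (-1 : R)) f l)
  rw [coeff_rescale, hf] at hcoeff
  rcases Nat.even_or_odd l with hl | hl
  · have hp : Odd p := by grind
    rw [hl.neg_pow, hp.neg_one_pow, neg_one_mul, eq_comm] at hcoeff
    exact self_eq_neg.mp hcoeff
  · have hp : Even p := by grind
    rw [hl.neg_pow, hp.neg_one_pow, one_mul, map_neg] at hcoeff
    exact self_eq_neg.mp hcoeff

end

theorem coeff_mul_of_even_support {R : Type*} [Semiring R] {f g : R⟦X⟧} {l : ℕ}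
    (hf : ∀ p, coeff p f ≠ 0 → ∃ i, p = 2 * i + l)
    (hg : ∀ q, coeff q g ≠ 0 → ∃ j, q = 2 * j + 2) (n : ℕ) :
    coeff (2 * n + l) (f * g) = ∑ i ∈ range n, coeff (2 * i + l) f * coeff (2 * n - 2 * i) g := by
  rw [coeff_mul]
  symm
  refine sum_bij_ne_zero (fun i _ _ => (2 * i + l, 2 * n - 2 * i)) ?_ ?_ ?_ (fun _ _ _ => rfl)
  · intro i hi _
    rw [HasAntidiagonal.mem_antidiagonal]
    grind
  · intro i _ _ i' _ _ h
    grind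
  · rintro ⟨p, q⟩ hpq hne
    obtain ⟨i, rfl⟩ := hf p (left_ne_zero_of_mul hne)
    obtain ⟨j, rfl⟩ := hg q (right_ne_zero_of_mul hne)
    rw [HasAntidiagonal.mem_antidiagonal] at hpq
    have hq : 2 * j + 2 = 2 * n - 2 * i := by omega
    exact ⟨i, mem_range.mpr (by omega), by rwa [← hq], by rw [hq]⟩

def sinh : ℚ⟦X⟧ := mk fun m => if Even m then 0 else (m ! : ℚ)⁻¹

def cosh : ℚ⟦X⟧ := mk fun m => if Even m then (m ! : ℚ)⁻¹ else 0

theorem derivative_sinh : d⁄dX ℚ sinh = cosh := by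
  ext m
  simp only [coeff_derivative, sinh, cosh, coeff_mk, Nat.even_add_one, ite_not]
  split_ifs
  · rw [factorial_succ, cast_mul, mul_inv, mul_comm, ← mul_assoc]
    push_cast
    field_simp
  · simp

theorem rescale_neg_one_sinh : rescale (-1) sinh = -sinh := by
  ext m
  simp only [sinh, coeff_rescale, coeff_mk, map_neg]
  split_ifs with hm
  · simp
  · simp [(Nat.not_even_iff_odd.mp hm).neg_one_pow]

theorem rescale_exp_sub_rescale_neg_exp (c : ℚ) :
    rescale c (exp ℚ) - rescale (-c) (exp ℚ) = rescale c (2 * sinh) := by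
  ext m
  rw [map_mul, map_ofNat, ← map_ofNat C, coeff_C_mul]
  simp only [sinh, map_sub, coeff_rescale, coeff_exp, coeff_mk, Algebra.algebraMap_self,
    RingHom.id_apply]
  split_ifs with hm
  · simp [hm.neg_pow]
  · simp only [one_div, (Nat.not_even_iff_odd.mp hm).neg_pow, neg_mul, sub_neg_eq_add]
    ring

theorem constantCoeff_sinh_sub_X : constantCoeff (sinh - X) = 0 := by
  rw [← coeff_zero_eq_constantCoeff_apply]
  simp [sinh]

theorem rescale_neg_one_sinh_sub_X : rescale (-1) (sinh - X) = -(sinh - X) := by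
  rw [map_sub, rescale_neg_one_sinh, rescale_neg_one_X, neg_sub_neg, neg_sub]

theorem derivative_sinh_sub_X : d⁄dX ℚ (sinh - X) = cosh - 1 := by
  rw [map_sub, derivative_sinh, derivative_X]

theorem exists_eq_of_coeff_sinh_sub_X_pow_ne_zero {p l : ℕ} (h : coeff p ((sinh - X) ^ l) ≠ 0) :
    ∃ i, p = 2 * i + l := by
  have hlp : l ≤ p := not_lt.mp fun hp => h (coeff_pow_eq_zero_of_lt constantCoeff_sinh_sub_X hp)
  obtain ⟨r, hr⟩ : Even (p + l) := Nat.not_odd_iff_even.mp fun ho =>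
    h (coeff_pow_eq_zero_of_odd rescale_neg_one_sinh_sub_X ho)
  exact ⟨r - l, by omega⟩

theorem coeff_cosh_sub_one (q : ℕ) :
    coeff q (cosh - 1) = if Even q ∧ q ≠ 0 then (q ! : ℚ)⁻¹ else 0 := by
  rcases eq_or_ne q 0 with rfl | hq
  · simp [cosh]
  · simp [cosh, coeff_one, hq]

theorem exists_eq_of_coeff_cosh_sub_one_ne_zero {q : ℕ} (h : coeff q (cosh - 1) ≠ 0) :
    ∃ j, q = 2 * j + 2 := by
  rw [coeff_cosh_sub_one] at h
  obtain ⟨⟨r, rfl⟩, hr⟩ : Even q ∧ q ≠ 0 := by_contra fun hq => h (if_neg hq)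
  exact ⟨r - 1, by omega⟩

theorem rescale_exp_pow (c : ℚ) (j : ℕ) : rescale c (exp ℚ) ^ j = rescale (j * c) (exp ℚ) := by
  rw [← map_pow, exp_pow_eq_rescale_exp, rescale_rescale]

theorem coeff_rescale_exp_sub_rescale_exp_pow (b c : ℚ) (k m : ℕ) :
    coeff m ((rescale b (exp ℚ) - rescale c (exp ℚ)) ^ k) =
      ∑ j ∈ range (k + 1), (-1) ^ j * (k.choose j : ℚ) * ((k - j) * b + j * c) ^ m / m ! := by
  rw [sub_eq_neg_add, add_pow, map_sum]
  refine sum_congr rfl fun j hj => ?_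
  have hterm : (-rescale c (exp ℚ)) ^ j * rescale b (exp ℚ) ^ (k - j) * (k.choose j : ℚ⟦X⟧) =
      C ((-1 : ℚ) ^ j * k.choose j) * rescale ((k - j : ℕ) * b + j * c) (exp ℚ) := by
    rw [neg_pow, rescale_exp_pow, rescale_exp_pow, add_comm, ← exp_mul_exp_eq_exp_add, map_mul,
      map_pow, map_neg, map_one, map_natCast]
    ring
  rw [hterm, coeff_C_mul, coeff_rescale, coeff_exp, cast_sub (by grind : j ≤ k)]
  simp only [Algebra.algebraMap_self, RingHom.id_apply]
  ring

end PowerSeries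

theorem Finset.sum_range_succ_eq_two_nsmul_sum_range_half {M : Type*} [AddCommMonoid M]
    {f : ℕ → M} {k : ℕ} (hsymm : ∀ j ≤ k, f (k - j) = f j) (hmid : Even k → f (k / 2) = 0) :
    ∑ j ∈ range (k + 1), f j = 2 • ∑ j ∈ range (k / 2 + 1), f j := by
  have hupper : ∑ j ∈ Ico (k / 2 + 1) (k + 1), f j = ∑ j ∈ range (k - k / 2), f j := by
    calc ∑ j ∈ Ico (k / 2 + 1) (k + 1), f j = ∑ j ∈ Ico (k / 2 + 1) (k + 1), f (k - j) :=
          sum_congr rfl fun j hj => (hsymm j (by grind)).symm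
      _ = _ := by
        rw [sum_Ico_reflect f _ le_rfl, Nat.sub_self, range_eq_Ico,
          show k + 1 - (k / 2 + 1) = k - k / 2 by omega]
  rw [← sum_range_add_sum_Ico f (by omega : k / 2 + 1 ≤ k + 1), hupper, two_nsmul]
  rcases Nat.even_or_odd k with hk | hk
  · rw [sum_range_succ, hmid hk, add_zero, show k - k / 2 = k / 2 by grind]
  · rw [show k - k / 2 = k / 2 + 1 by grind]

theorem sum_range_succ_alternating_eq_two_mul_sum_range_half {k m : ℕ} (hm : m ≠ 0)
    (hkm : Even (k + m)) :
    ∑ j ∈ range (k + 1), (-1 : ℚ) ^ j * k.choose j * ((k : ℚ) / 2 - j) ^ m =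
      2 * ∑ j ∈ range (k / 2 + 1), (-1 : ℚ) ^ j * k.choose j * ((k : ℚ) / 2 - j) ^ m := by
  rw [two_mul, ← two_nsmul]
  refine sum_range_succ_eq_two_nsmul_sum_range_half (fun j hj => ?_) fun hk => ?_
  · have hsign : (-1 : ℚ) ^ (k - j) * (-1) ^ m = (-1) ^ j := by
      obtain ⟨r, hr⟩ := hkm
      rw [← pow_add, neg_one_pow_eq_pow_mod_two, neg_one_pow_eq_pow_mod_two (n := j),
        show (k - j + m) % 2 = j % 2 by omega]
    rw [Nat.choose_symm hj, cast_sub hj, show (k : ℚ) / 2 - (k - j) = -(k / 2 - j) by ring,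
      neg_pow ((k : ℚ) / 2 - j)]
    linear_combination (k.choose j : ℚ) * ((k : ℚ) / 2 - j) ^ m * hsign
  · obtain ⟨r, rfl⟩ := hk
    simp [show (r + r) / 2 = r by omega, hm]

theorem a_eq_zero_of_lt {n l : ℕ} (h : n < l) : a n l = 0 := by
  obtain ⟨l, rfl⟩ := Nat.exists_eq_add_one_of_ne_zero (by omega : l ≠ 0)
  rw [a, Ico_eq_empty (by omega), sum_empty]

theorem a_succ (n l : ℕ) :
    a n (l + 1) = ∑ i ∈ range n, a i l * ((2 * n + l).choose (2 * n - 2 * i) : ℚ) := by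
  rw [a]
  refine sum_subset (fun i hi => mem_range.mpr (mem_Ico.mp hi).2) fun i hi hil => ?_
  rw [a_eq_zero_of_lt (by grind), zero_mul]

theorem coeff_sinh_sub_X_pow (l n : ℕ) :
    coeff (2 * n + l) ((sinh - X) ^ l) = l ! * a n l / (2 * n + l)! := by
  induction l generalizing n with
  | zero => cases n <;> simp [a, coeff_one]
  | succ l ih =>
    have hderiv : coeff (2 * n + l + 1) ((sinh - X) ^ (l + 1)) * ((2 * n + l : ℕ) + 1) =
        (l + 1) * ∑ i ∈ range n, coeff (2 * i + l) ((sinh - X) ^ l) * ((2 * n - 2 * i)! : ℚ)⁻¹ := by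
      rw [← coeff_derivative, derivative_pow, derivative_sinh_sub_X, mul_assoc, ← map_natCast C,
        coeff_C_mul, add_tsub_cancel_right,
        coeff_mul_of_even_support (fun _ => exists_eq_of_coeff_sinh_sub_X_pow_ne_zero)
          (fun _ => exists_eq_of_coeff_cosh_sub_one_ne_zero)]
      push_cast
      refine congrArg _ (sum_congr rfl fun i hi => ?_)
      rw [coeff_cosh_sub_one, if_pos ⟨⟨n - i, by omega⟩, by grind⟩]
    rw [eq_div_iff (by positivity), show 2 * n + (l + 1) = 2 * n + l + 1 by rfl, factorial_succ,
      cast_mul, ← mul_assoc, cast_succ, hderiv, a_succ, factorial_succ, mul_sum, mul_sum, sum_mul]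
    refine sum_congr rfl fun i hi => ?_
    have hi : i < n := mem_range.mp hi
    rw [ih, cast_choose ℚ (by omega : 2 * n - 2 * i ≤ 2 * n + l),
      show 2 * n + l - (2 * n - 2 * i) = 2 * i + l by omega]
    field_simp
    push_cast
    ring
theorem coeff_sinh_pow (n k : ℕ) :
    coeff (k + 2 * n) (sinh ^ k) =
      ∑ l ∈ range (k + 1), (k.choose l : ℚ) * (l ! * a n l / (2 * n + l)!) := by
  conv_lhs => rw [← sub_add_cancel sinh X, add_pow, map_sum]
  refine sum_congr rfl fun l hl => ?_
  rw [← map_natCast C, mul_comm _ (C _), coeff_C_mul, ← coeff_sinh_sub_X_pow,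
    show k + 2 * n = 2 * n + l + (k - l) by grind, coeff_mul_X_pow]

theorem A_eq_mul_coeff_sinh_pow {n : ℕ} (hn : n ≠ 0) (k : ℕ) :
    A n k = (2 * n)! / 2 ^ (2 * n) * coeff (k + 2 * n) (sinh ^ k) := by
  have hfull : ∑ j ∈ range (k + 1), (-1 : ℚ) ^ j * k.choose j * ((k : ℚ) / 2 - j) ^ (k + 2 * n) =
      (k + 2 * n)! * coeff (k + 2 * n) (rescale (1 / 2 : ℚ) (2 * sinh) ^ k) := by
    rw [← rescale_exp_sub_rescale_neg_exp, coeff_rescale_exp_sub_rescale_exp_pow, mul_sum]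
    refine sum_congr rfl fun j _ => ?_
    rw [show (k - j : ℚ) * (1 / 2) + j * -(1 / 2) = k / 2 - j by ring]
    field_simp
  have hrescale : coeff (k + 2 * n) (rescale (1 / 2 : ℚ) (2 * sinh) ^ k) =
      coeff (k + 2 * n) (sinh ^ k) / 2 ^ (2 * n) := by
    rw [← map_pow, coeff_rescale, mul_pow, ← map_ofNat C 2, ← map_pow, coeff_C_mul, div_pow, one_pow,
      pow_add]
    field_simp
  have hhalf := sum_range_succ_alternating_eq_two_mul_sum_range_half (k := k) (m := k + 2 * n)
    (by omega) ⟨k + n, by ring⟩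
  rw [hfull, hrescale] at hhalf
  rw [A, add_comm (2 * n) k, ← mul_div_cancel_left₀ (∑ j ∈ range (k / 2 + 1), _) two_ne_zero, ← hhalf]
  field_simp

theorem choose_mul_factorial_div_factorial_add (m k l : ℕ) :
    (k.choose l : ℚ) * (l ! / (m + l)!) = ((m + k).choose (m + l) : ℚ) / (m ! * (m + k).choose m) := by
  have hdesc := descFactorial_mul_descFactorial (n := m + k) (show m ≤ m + l by omega)
  rw [add_tsub_cancel_left, add_tsub_cancel_left, descFactorial_eq_factorial_mul_choose,
    descFactorial_eq_factorial_mul_choose, descFactorial_eq_factorial_mul_choose] at hdesc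
  have hpos : 0 < (m + k).choose m := choose_pos (by omega)
  field_simp
  norm_cast
  linarith

theorem sum_range_choose_mul_a_eq (n k : ℕ) :
    ∑ l ∈ range (k + 1), (k.choose l : ℚ) * (l ! * a n l / (2 * n + l)!) =
      (((2 * n)! : ℚ) * (2 * n + k).choose (2 * n))⁻¹ *
        ∑ l ∈ range (n + 1), a n l * ((2 * n + k).choose (2 * n + l) : ℚ) := by
  set g : ℕ → ℚ := fun l => a n l * ((2 * n + k).choose (2 * n + l) : ℚ)
  have hg : ∀ s t, min n k < s → s ≤ t → ∑ l ∈ range t, g l = ∑ l ∈ range s, g l := by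
    intro s t hs hst
    refine (sum_subset (range_subset_range.mpr hst) fun l hlt hls => ?_).symm
    simp only [mem_range, not_lt] at hlt hls
    rcases le_total n k with h | h
    · simp [g, a_eq_zero_of_lt (by omega : n < l)]
    · simp [g, choose_eq_zero_of_lt (by omega : 2 * n + k < 2 * n + l)]
  rw [← hg (n + 1) (n + k + 1) (by omega) (by omega), hg (k + 1) (n + k + 1) (by omega) (by omega),
    mul_sum]
  refine sum_congr rfl fun l _ => ?_
  rw [show (k.choose l : ℚ) * (l ! * a n l / (2 * n + l)!) = k.choose l * (l ! / (2 * n + l)!) * a n l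
    by ring, choose_mul_factorial_div_factorial_add]
  ring

/-- For all integers `n ≥ 1` and `k ≥ 0`,
`A(n,k) = 2^{−2n} · C(2n+k, 2n)⁻¹ · ∑_{l=0}^{n} a(n,l) · C(2n+k, 2n+l)`. -/
theorem A_eq_riordan_sum (n k : ℕ) (hn : 1 ≤ n) :
    A n k =
      ((2 : ℚ) ^ (2 * n))⁻¹ * ((Nat.choose (2 * n + k) (2 * n) : ℚ))⁻¹ *
        ∑ l ∈ Finset.range (n + 1), a n l * (Nat.choose (2 * n + k) (2 * n + l) : ℚ) := by
  rw [A_eq_mul_coeff_sinh_pow (by omega) k, coeff_sinh_pow, sum_range_choose_mul_a_eq]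
  field_simp
end

section
/- Let n ≥ 1 be an integer and let p ∈ ℚ[X] be the (unique) polynomial of degree at most n with p(0) = 0 and p(k) = A(n,k) for every integer 1 ≤ k ≤ n. Then for every integer k ≥ 1, p(−k) = (−1)^{n} · ((2n)!/(6^{n}·2^{2n})) · k · ∑_{l=1}^{n} (−1)^{l+1} · C(n+k−l, k) · P(l, n). -/
/-- The P-polynomial values `P(j,n) := 6^n · a(n, n+1−j) / ((2n)! · (n+1−j) · C(3n+1−j, 2n))`
(for `1 ≤ j ≤ n`). -/
def P (j n : ℕ) : ℚ :=
  6 ^ n * a n (n + 1 - j) /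
    ((Nat.factorial (2 * n) : ℚ) * ((n + 1 - j : ℕ) : ℚ) *
      (Nat.choose (3 * n + 1 - j) (2 * n) : ℚ))

/-!
With `S(x) = sinh √x / √x = ∑ xʳ/(2r+1)!`, the differential equation `2x S' + S = cosh √x` turns
Riordan's recurrence into `a(n,m) = (2n+m)!/m! · [xⁿ] (S - 1)ᵐ`, and writing
`(eᵗ - e⁻ᵗ)ʲ = (2t S(t²))ʲ` shows `A(n,j) = (2n)!/4ⁿ · [xⁿ] Sʲ`. By the binomial theorem,
`j ↦ [xⁿ] (1 + (S - 1))ʲ = ∑_{m ≤ n} binom(j, m) [xⁿ] (S - 1)ᵐ` is a polynomial of degree at most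
`n` vanishing at `0`, so `p` is `(2n)!/4ⁿ` times it. Evaluating at `-k` with
`binom(-k, m) = (-1)ᵐ binom(k+m-1, m)` and `m · binom(k+m-1, m) = k · binom(k+m-1, k)` gives the
formula, since `P(n+1-m, n) = 6ⁿ [xⁿ] (S - 1)ᵐ / m`.
-/

open Finset PowerSeries
open scoped Nat Polynomial

theorem PowerSeries.coeff_pow_eq_zero_of_lt_s11 {R : Type*} [CommSemiring R] {f : R⟦X⟧}
    (hf : constantCoeff f = 0) {i m : ℕ} (h : i < m) : coeff i (f ^ m) = 0 := by
  obtain ⟨g, rfl⟩ := X_dvd_iff.mpr hf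
  rw [mul_pow, coeff_X_pow_mul', if_neg h.not_ge]

theorem Finset.sum_range_succ_eq_two_mul_of_symm {R : Type*} [Semiring R] (g : ℕ → R) (j : ℕ)
    (hsymm : ∀ i ≤ j, g (j - i) = g i) (hmid : Even j → g (j / 2) = 0) :
    ∑ i ∈ range (j + 1), g i = 2 * ∑ i ∈ range (j / 2 + 1), g i := by
  have hupper : ∑ i ∈ Ico (j / 2 + 1) (j + 1), g i = ∑ i ∈ range (j - j / 2), g i := by
    rw [sum_Ico_eq_sum_range, ← sum_range_reflect]
    refine sum_congr (by congr 1; omega) fun i hi => ?_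
    rw [mem_range] at hi
    rw [← hsymm i (by omega)]
    congr 1
    omega
  rw [← sum_range_add_sum_Ico _ (by omega : j / 2 + 1 ≤ j + 1), hupper, two_mul]
  rcases Nat.even_or_odd j with hj | hj
  · obtain ⟨u, rfl⟩ := hj
    rw [sum_range_succ, hmid ⟨u, rfl⟩, add_zero, show u + u - (u + u) / 2 = (u + u) / 2 by omega]
  · obtain ⟨u, rfl⟩ := hj
    rw [show 2 * u + 1 - (2 * u + 1) / 2 = (2 * u + 1) / 2 + 1 by omega]

theorem Polynomial.eq_of_natDegree_le_of_eval_natCast_eq {R : Type*} [CommRing R] [IsDomain R]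
    [CharZero R] {p q : R[X]} {n : ℕ} (hp : p.natDegree ≤ n) (hq : q.natDegree ≤ n)
    (h : ∀ i ≤ n, p.eval (i : R) = q.eval (i : R)) : p = q :=
  eq_of_natDegree_lt_card_of_eval_eq p q (f := fun i : Fin (n + 1) => ((i : ℕ) : R))
    (fun _ _ hij => Fin.ext (Nat.cast_injective hij)) (fun i => h i (Nat.lt_succ_iff.mp i.2))
    (by simp only [Fintype.card_fin]; omega)

section OneAddPow

variable {K : Type*} [Field K]

/-- `∑_{m ≤ n} binom(x, m) [Xⁿ] fᵐ`, i.e. `[Xⁿ] (1 + f)ˣ` as a polynomial in `x`. -/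
noncomputable def coeffOneAddPowPoly (f : K⟦X⟧) (n : ℕ) : K[X] :=
  ∑ m ∈ range (n + 1), Polynomial.C (coeff n (f ^ m) / m !) * descPochhammer K m

theorem natDegree_coeffOneAddPowPoly_le (f : K⟦X⟧) (n : ℕ) :
    (coeffOneAddPowPoly f n).natDegree ≤ n :=
  Polynomial.natDegree_sum_le_of_forall_le _ _ fun m hm =>
    (Polynomial.natDegree_C_mul_le _ _).trans <| by
      rw [descPochhammer_natDegree]; exact Nat.lt_succ_iff.mp (mem_range.mp hm)

theorem eval_natCast_coeffOneAddPowPoly [CharZero K] {f : K⟦X⟧} (hf : constantCoeff f = 0)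
    (n j : ℕ) :
    (coeffOneAddPowPoly f n).eval (j : K) = coeff n ((1 + f) ^ j) := by
  set g : ℕ → K := fun m => j.choose m * coeff n (f ^ m)
  have hg : ∀ m, n < m ∨ j < m → g m = 0 := by
    rintro m (h | h)
    · simp [g, coeff_pow_eq_zero_of_lt_s11 hf h]
    · simp [g, Nat.choose_eq_zero_of_lt h]
  calc (coeffOneAddPowPoly f n).eval (j : K)
      = ∑ m ∈ range (n + 1), g m := by
        simp only [coeffOneAddPowPoly, Polynomial.eval_finsetSum, Polynomial.eval_mul,
          Polynomial.eval_C, descPochhammer_eval_eq_descFactorial,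
          Nat.descFactorial_eq_factorial_mul_choose, g]
        refine sum_congr rfl fun m _ => ?_
        have : (m ! : K) ≠ 0 := by exact_mod_cast m.factorial_ne_zero
        push_cast
        field_simp
    _ = ∑ m ∈ range (n + j + 1), g m :=
        sum_subset (range_subset_range.mpr (by omega)) fun m _ hm =>
          hg m (by rw [mem_range] at hm; omega)
    _ = ∑ m ∈ range (j + 1), g m :=
        (sum_subset (range_subset_range.mpr (by omega)) fun m _ hm =>
          hg m (by rw [mem_range] at hm; omega)).symm
    _ = coeff n ((1 + f) ^ j) := by
        rw [add_comm (1 : K⟦X⟧) f, add_pow, map_sum]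
        refine sum_congr rfl fun m _ => ?_
        rw [one_pow, mul_one, ← map_natCast (C (R := K)), coeff_mul_C, mul_comm]

theorem eval_neg_natCast_coeffOneAddPowPoly [CharZero K] (f : K⟦X⟧) (n k : ℕ) :
    (coeffOneAddPowPoly f n).eval (-(k : K)) =
      ∑ m ∈ range (n + 1), (-1) ^ m * (k + m - 1).choose m * coeff n (f ^ m) := by
  simp only [coeffOneAddPowPoly, Polynomial.eval_finsetSum, Polynomial.eval_mul,
    Polynomial.eval_C]
  refine sum_congr rfl fun m _ => ?_
  have hasc := ascPochhammer_eval_neg_eq_descPochhammer K (-(k : K)) m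
  rw [neg_neg, ← Nat.cast_ascFactorial, Nat.ascFactorial_eq_factorial_mul_choose'] at hasc
  have hsq : ((-1 : K) ^ m) ^ 2 = 1 := by rw [← pow_mul, pow_mul']; simp
  have hdesc : (descPochhammer K m).eval (-(k : K)) = (-1) ^ m * m ! * (k + m - 1).choose m := by
    push_cast at hasc
    linear_combination -(-1 : K) ^ m * hasc - (descPochhammer K m).eval (-(k : K)) * hsq
  have : (m ! : K) ≠ 0 := by exact_mod_cast m.factorial_ne_zero
  rw [hdesc]
  field_simp

theorem PowerSeries.coeff_X_mul_derivative {R : Type*} [CommSemiring R] (f : R⟦X⟧) (n : ℕ) :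
    coeff n (X * d⁄dX R f) = n * coeff n f := by
  rcases n with _ | n
  · simp
  · rw [coeff_succ_X_mul, coeff_derivative, mul_comm]
    push_cast
    ring

noncomputable def sinhSqrtDivSqrt : ℚ⟦X⟧ := mk fun r => 1 / (2 * r + 1)!

noncomputable def coshSqrt : ℚ⟦X⟧ := mk fun r => 1 / (2 * r)!

theorem C_two_mul_X_mul_derivative_add_sinhSqrtDivSqrt :
    C 2 * (X * d⁄dX ℚ sinhSqrtDivSqrt) + sinhSqrtDivSqrt = coshSqrt := by
  ext r
  have hfac : ((2 * r + 1)! : ℚ) = (2 * r + 1) * (2 * r)! := by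
    push_cast [Nat.factorial_succ]
    ring
  simp only [map_add, coeff_C_mul, coeff_X_mul_derivative, sinhSqrtDivSqrt, coshSqrt, coeff_mk,
    hfac]
  field_simp

theorem coeff_sinhSqrtDivSqrt_sub_one_pow_succ (n m : ℕ) :
    (2 * n + m + 1 : ℚ) * coeff n ((sinhSqrtDivSqrt - 1) ^ (m + 1)) =
      (m + 1) * coeff n ((sinhSqrtDivSqrt - 1) ^ m * (coshSqrt - 1)) := by
  set D := sinhSqrtDivSqrt - 1
  have hode : C 2 * (X * d⁄dX ℚ D) + D = coshSqrt - 1 := by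
    rw [← C_two_mul_X_mul_derivative_add_sinhSqrtDivSqrt]
    simp only [D, map_sub, derivative_one, sub_zero]
    ring
  have hpow : C 2 * (X * d⁄dX ℚ (D ^ (m + 1))) + C ((m : ℚ) + 1) * D ^ (m + 1) =
      C ((m : ℚ) + 1) * (D ^ m * (coshSqrt - 1)) := by
    rw [← hode, derivative_pow]
    simp only [map_add, map_natCast, map_one, Nat.cast_add, Nat.cast_one, Nat.add_sub_cancel]
    ring
  have := congrArg (coeff n) hpow
  rw [map_add, coeff_C_mul, coeff_C_mul, coeff_C_mul, coeff_X_mul_derivative] at this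
  linear_combination this

theorem coeff_mul_coshSqrt_sub_one (g : ℚ⟦X⟧) (n : ℕ) :
    coeff n (g * (coshSqrt - 1)) = ∑ i ∈ range n, coeff i g / (2 * (n - i))! := by
  rw [coeff_mul, Nat.sum_antidiagonal_eq_sum_range_succ_mk, sum_range_succ]
  simp only [map_sub, coshSqrt, coeff_mk, coeff_one, Nat.sub_self, if_true, mul_zero,
    Nat.factorial_zero, Nat.cast_one, div_self one_ne_zero, sub_self, add_zero]
  refine sum_congr rfl fun i hi => ?_
  rw [if_neg (by rw [mem_range] at hi; omega)]
  ring

theorem constantCoeff_sinhSqrtDivSqrt_sub_one : constantCoeff (sinhSqrtDivSqrt - 1) = 0 := by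
  rw [← coeff_zero_eq_constantCoeff_apply]
  simp [sinhSqrtDivSqrt]

theorem a_eq_coeff (n m : ℕ) :
    a n m = (2 * n + m)! / m ! * coeff n ((sinhSqrtDivSqrt - 1) ^ m) := by
  induction m generalizing n with
  | zero => cases n <;> simp [a, coeff_one]
  | succ m ih =>
    have hrec := coeff_sinhSqrtDivSqrt_sub_one_pow_succ n m
    rw [coeff_mul_coshSqrt_sub_one] at hrec
    set D := sinhSqrtDivSqrt - 1
    have hterm : ∀ i < n, a i m * (2 * n + m).choose (2 * n - 2 * i) =
        (2 * n + m)! / m ! * (coeff i (D ^ m) / (2 * (n - i))!) := by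
      intro i hi
      have h := Nat.choose_mul_factorial_mul_factorial (by omega : 2 * n - 2 * i ≤ 2 * n + m)
      rw [show 2 * n + m - (2 * n - 2 * i) = 2 * i + m by omega,
        show 2 * n - 2 * i = 2 * (n - i) by omega] at h
      rw [ih, show 2 * n - 2 * i = 2 * (n - i) by omega, ← h]
      push_cast
      field_simp
    calc a n (m + 1)
        = ∑ i ∈ Ico m n, a i m * (2 * n + m).choose (2 * n - 2 * i) := by cases n <;> rfl
      _ = ∑ i ∈ Ico m n, (2 * n + m)! / m ! * (coeff i (D ^ m) / (2 * (n - i))!) :=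
        sum_congr rfl fun i hi => hterm i (mem_Ico.mp hi).2
      _ = ∑ i ∈ range n, (2 * n + m)! / m ! * (coeff i (D ^ m) / (2 * (n - i))!) := by
        refine sum_subset (fun i hi => mem_range.mpr (mem_Ico.mp hi).2) fun i hi hni => ?_
        have him : i < m := by simp only [mem_Ico, mem_range] at hi hni; omega
        rw [coeff_pow_eq_zero_of_lt_s11 constantCoeff_sinhSqrtDivSqrt_sub_one him]
        simp
      _ = (2 * n + (m + 1))! / (m + 1)! * coeff n (D ^ (m + 1)) := by
        rw [← mul_sum]
        have h1 : ((2 * n + (m + 1))! : ℚ) = (2 * n + m + 1) * (2 * n + m)! := by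
          push_cast [← add_assoc, Nat.factorial_succ]; ring
        have h2 : ((m + 1)! : ℚ) = (m + 1) * m ! := by push_cast [Nat.factorial_succ]; ring
        rw [h1, h2]
        field_simp
        linear_combination -hrec

theorem exp_sub_rescale_neg_one_exp :
    exp ℚ - rescale (-1) (exp ℚ) = C 2 * (X * expand 2 two_ne_zero sinhSqrtDivSqrt) := by
  ext r
  rcases r with _ | r
  · rw [map_sub, coeff_rescale, coeff_C_mul, coeff_zero_X_mul]
    simp
  · rw [coeff_C_mul, coeff_succ_X_mul, coeff_expand, map_sub, coeff_rescale, coeff_exp]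
    rcases Nat.even_or_odd r with ⟨s, rfl⟩ | ⟨s, rfl⟩
    · rw [if_pos ⟨s, by ring⟩, show (s + s) / 2 = s by omega, Odd.neg_one_pow ⟨s, by ring⟩,
        ← two_mul]
      simp only [sinhSqrtDivSqrt, coeff_mk, Algebra.algebraMap_self, RingHom.id_apply]
      ring
    · rw [if_neg (by omega), Even.neg_one_pow ⟨s + 1, by ring⟩]
      ring

theorem coeff_exp_sub_rescale_neg_one_exp_pow (j N : ℕ) :
    coeff N ((exp ℚ - rescale (-1) (exp ℚ)) ^ j) =
      ∑ i ∈ range (j + 1), (-1) ^ i * j.choose i * ((j : ℚ) - 2 * i) ^ N / N ! := by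
  rw [sub_eq_neg_add, add_pow, map_sum]
  refine sum_congr rfl fun i hi => ?_
  have hi : i ≤ j := Nat.lt_succ_iff.mp (mem_range.mp hi)
  have hexp : (-rescale (-1) (exp ℚ)) ^ i * exp ℚ ^ (j - i) =
      C ((-1) ^ i) * rescale ((j : ℚ) - 2 * i) (exp ℚ) := by
    rw [neg_pow, ← map_pow, exp_pow_eq_rescale_exp, exp_pow_eq_rescale_exp, rescale_rescale,
      mul_assoc, exp_mul_exp_eq_exp_add, Nat.cast_sub hi]
    rw [show (i : ℚ) * -1 + (j - i) = j - 2 * i by ring, map_pow, map_neg, map_one]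
  rw [hexp, ← map_natCast C, mul_comm, ← mul_assoc, ← map_mul, coeff_C_mul, coeff_rescale,
    coeff_exp]
  simp only [Algebra.algebraMap_self, RingHom.id_apply]
  ring

theorem coeff_add_two_mul_exp_sub_rescale_neg_one_exp_pow (n j : ℕ) :
    coeff (j + 2 * n) ((exp ℚ - rescale (-1) (exp ℚ)) ^ j) =
      2 ^ j * coeff n (sinhSqrtDivSqrt ^ j) := by
  rw [exp_sub_rescale_neg_one_exp, mul_pow, mul_pow, ← map_pow, ← map_pow, coeff_C_mul,
    add_comm, coeff_X_pow_mul, coeff_expand_mul]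

theorem A_eq_coeff {n j : ℕ} (h : 0 < j + n) :
    A n j = (2 * n)! / 4 ^ n * coeff n (sinhSqrtDivSqrt ^ j) := by
  set N := j + 2 * n
  set g : ℕ → ℚ := fun i => (-1) ^ i * j.choose i * ((j : ℚ) / 2 - i) ^ N
  have hsymm : ∀ i ≤ j, g (j - i) = g i := by
    intro i hi
    have hsign : (-1 : ℚ) ^ (j - i) * (-1) ^ N = (-1) ^ i := by
      rw [← pow_add, show j - i + N = i + 2 * (j - i + n) by omega, pow_add, pow_mul]
      simp
    simp only [g, Nat.choose_symm hi, Nat.cast_sub hi]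
    rw [show (j : ℚ) / 2 - (j - i) = -((j : ℚ) / 2 - i) by ring, neg_pow ((j : ℚ) / 2 - i),
      ← hsign]
    ring
  have hmid : Even j → g (j / 2) = 0 := by
    rintro ⟨u, rfl⟩
    simp only [g, show (u + u) / 2 = u by omega, Nat.cast_add]
    rw [show ((u : ℚ) + u) / 2 - u = 0 by ring, zero_pow (by omega), mul_zero]
  have hfull : ∑ i ∈ range (j + 1), g i =
      N ! / 2 ^ N * coeff N ((exp ℚ - rescale (-1) (exp ℚ)) ^ j) := by
    rw [coeff_exp_sub_rescale_neg_one_exp_pow, mul_sum]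
    refine sum_congr rfl fun i _ => ?_
    have : (N ! : ℚ) ≠ 0 := by positivity
    simp only [g]
    rw [show (j : ℚ) / 2 - i = (j - 2 * i) / 2 by ring, div_pow]
    field_simp
  calc A n j = (2 * n)! / N ! * ∑ i ∈ range (j + 1), g i := by
        rw [A, sum_range_succ_eq_two_mul_of_symm g j hsymm hmid, add_comm (2 * n)]
        ring
    _ = (2 * n)! / 4 ^ n * coeff n (sinhSqrtDivSqrt ^ j) := by
      rw [hfull, coeff_add_two_mul_exp_sub_rescale_neg_one_exp_pow]
      have : (N ! : ℚ) ≠ 0 := by positivity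
      rw [show N = j + 2 * n from rfl, pow_add, pow_mul]
      field_simp
      norm_num
      ring

theorem P_sub_eq_coeff {i n : ℕ} (hi : i < n) :
    P (n - i) n = 6 ^ n * coeff n ((sinhSqrtDivSqrt - 1) ^ (i + 1)) / (i + 1) := by
  have h := Nat.choose_mul_factorial_mul_factorial (Nat.le_add_right (2 * n) (i + 1))
  rw [Nat.add_sub_cancel_left] at h
  rw [P, show n + 1 - (n - i) = i + 1 by omega, show 3 * n + 1 - (n - i) = 2 * n + (i + 1) by omega,
    a_eq_coeff, ← h]
  have : ((2 * n + (i + 1)).choose (2 * n) : ℚ) ≠ 0 := by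
    exact_mod_cast (Nat.choose_pos (Nat.le_add_right _ _)).ne'
  push_cast
  field_simp

theorem Finset.sum_Icc_one_eq_sum_range_sub {M : Type*} [AddCommMonoid M] (f : ℕ → M)
    (n : ℕ) :
    ∑ l ∈ Icc 1 n, f l = ∑ i ∈ range n, f (n - i) :=
  sum_nbij' (fun l => n - l) (fun i => n - i)
    (fun l hl => by simp only [mem_Icc, mem_range] at hl ⊢; omega)
    (fun i hi => by simp only [mem_Icc, mem_range] at hi ⊢; omega)
    (fun l hl => by simp only [mem_Icc] at hl; omega)
    (fun i hi => by simp only [mem_range] at hi; omega)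
    (fun l hl => by simp only [mem_Icc] at hl; congr 1; omega)

theorem sum_Icc_P_eq_sum_coeff (n k : ℕ) :
    (-1 : ℚ) ^ n * ((2 * n)! / (6 ^ n * 2 ^ (2 * n))) * k *
        ∑ l ∈ Icc 1 n, (-1 : ℚ) ^ (l + 1) * ((n + k - l).choose k : ℚ) * P l n =
      ((2 * n)! / 4 ^ n : ℚ) * ∑ i ∈ range n, (-1 : ℚ) ^ (i + 1) *
        ((k + (i + 1) - 1).choose (i + 1) : ℚ) * coeff n ((sinhSqrtDivSqrt - 1) ^ (i + 1)) := by
  rw [sum_Icc_one_eq_sum_range_sub, mul_sum, mul_sum]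
  refine sum_congr rfl fun i hi => ?_
  have hi : i < n := mem_range.mp hi
  have hsign : (-1 : ℚ) ^ n * (-1) ^ (n - i + 1) = (-1) ^ (i + 1) := by
    rw [← pow_add, show n + (n - i + 1) = i + 1 + 2 * (n - i) by omega, pow_add, pow_mul]
    simp
  have hchoose : ((k + i).choose (i + 1) : ℚ) = k * (k + i).choose k / (i + 1) := by
    have := Nat.choose_succ_right_eq (k + i) i
    rw [Nat.add_sub_cancel, ← Nat.choose_symm_add] at this
    rw [eq_div_iff (by positivity)]
    exact_mod_cast this.trans (mul_comm _ _)
  rw [P_sub_eq_coeff hi, show n + k - (n - i) = k + i by omega, show k + (i + 1) - 1 = k + i by omega,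
    hchoose, ← hsign, pow_mul]
  field_simp
  ring

theorem eq_C_mul_coeffOneAddPowPoly {n : ℕ} (hn : 1 ≤ n) {p : ℚ[X]} (hdeg : p.natDegree ≤ n)
    (h0 : p.eval 0 = 0) (hA : ∀ k : ℕ, 1 ≤ k → k ≤ n → p.eval (k : ℚ) = A n k) :
    p = Polynomial.C ((2 * n)! / 4 ^ n : ℚ) * coeffOneAddPowPoly (sinhSqrtDivSqrt - 1) n := by
  refine Polynomial.eq_of_natDegree_le_of_eval_natCast_eq hdeg
    ((Polynomial.natDegree_C_mul_le _ _).trans (natDegree_coeffOneAddPowPoly_le _ n))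
    fun j hj => ?_
  rw [Polynomial.eval_C_mul,
    eval_natCast_coeffOneAddPowPoly constantCoeff_sinhSqrtDivSqrt_sub_one, add_sub_cancel]
  rcases j with _ | j
  · rw [pow_zero, coeff_one, if_neg (by omega), mul_zero, Nat.cast_zero, h0]
  · rw [hA _ (by omega) hj, A_eq_coeff (by omega)]

theorem eval_neg_eq_P_sum_general (n : ℕ) (hn : 1 ≤ n) (p : Polynomial ℚ)
    (hdeg : p.natDegree ≤ n) (h0 : p.eval 0 = 0)
    (hA : ∀ k : ℕ, 1 ≤ k → k ≤ n → p.eval (k : ℚ) = A n k) (k : ℕ) :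
    p.eval (-(k : ℚ)) =
      (-1 : ℚ) ^ n * ((Nat.factorial (2 * n) : ℚ) / (6 ^ n * 2 ^ (2 * n))) * (k : ℚ) *
        ∑ l ∈ Finset.Icc 1 n,
          (-1 : ℚ) ^ (l + 1) * (Nat.choose (n + k - l) k : ℚ) * P l n := by
  rw [eq_C_mul_coeffOneAddPowPoly hn hdeg h0 hA, Polynomial.eval_C_mul,
    eval_neg_natCast_coeffOneAddPowPoly, sum_range_succ', pow_zero (sinhSqrtDivSqrt - 1),
    coeff_one, if_neg (by omega), mul_zero, add_zero, sum_Icc_P_eq_sum_coeff]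

/-- Let `n ≥ 1` and let `p ∈ ℚ[X]` be the polynomial of degree at most `n`
with `p(0) = 0` and `p(k) = A(n,k)` for `1 ≤ k ≤ n`. Then for every integer `k ≥ 1`,
`p(−k) = (−1)^n · ((2n)!/(6^n·2^{2n})) · k · ∑_{l=1}^{n} (−1)^{l+1} · C(n+k−l, k) · P(l, n)`. -/
theorem eval_neg_eq_P_sum (n : ℕ) (hn : 1 ≤ n) (p : Polynomial ℚ)
    (hdeg : p.natDegree ≤ n) (h0 : p.eval 0 = 0)
    (hA : ∀ k : ℕ, 1 ≤ k → k ≤ n → p.eval (k : ℚ) = A n k) (k : ℕ) (hk : 1 ≤ k) :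
    p.eval (-(k : ℚ)) =
      (-1 : ℚ) ^ n * ((Nat.factorial (2 * n) : ℚ) / (6 ^ n * 2 ^ (2 * n))) * (k : ℚ) *
        ∑ l ∈ Finset.Icc 1 n,
          (-1 : ℚ) ^ (l + 1) * (Nat.choose (n + k - l) k : ℚ) * P l n :=
  eval_neg_eq_P_sum_general n hn p hdeg h0 hA k
end OneAddPow
end
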